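/- Let σ = diag(p₁, …, p_N) be a diagonal positive definite density matrix (p_i > 0, Σp_i = 1) on ℂ^N and let R be a Hermitian traceless matrix. Define L to be the matrix with entries L_{ij} = ((log p_i - log p_j)/(p_i - p_j))·R_{ij} for p_i ≠ p_j and L_{ij} = R_{ij}/p_i when p_i = p_j. Then Tr(σ L²) ≥ Tr(R L), with equality if and only if R commutes with σ (i.e., R_{ij} = 0 whenever p_i ≠ p_j). -/

import Mathlib

/-!
With `c i j` the divided difference of `log` at `p i, p j`, the matrix `L` is the Hadamard
product `c ⊙ R`, so both traces are weighted sums of `|R i j|²`. Symmetrizing in `i, j`,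
`2 (Tr(σ L²) - Tr(R L)) = ∑ c i j ((p i + p j) c i j - 2) |R i j|²`, and each weight is
nonnegative, vanishing exactly when `p i = p j`: for `p i ≠ p j` this is the inequality
`(p i + p j) / 2 > (p i - p j) / (log p i - log p j)` between the arithmetic and the
logarithmic mean, which follows from `log ((1 + x) / (1 - x)) = 2 (x + x³ / 3 + ⋯)`.
-/

open Real

theorem dslope_comm {𝕜 E : Type*} [NontriviallyNormedField 𝕜] [NormedAddCommGroup E]
    [NormedSpace 𝕜 E] (f : 𝕜 → E) (a b : 𝕜) : dslope f a b = dslope f b a := by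
  rcases eq_or_ne a b with rfl | hab
  · rfl
  · rw [dslope_of_ne f hab.symm, dslope_of_ne f hab, slope_comm]

theorem two_mul_lt_log_one_add_sub_log_one_sub {x : ℝ} (hx₀ : 0 < x) (hx₁ : x < 1) :
    2 * x < log (1 + x) - log (1 - x) := by
  have hsum := hasSum_log_sub_log_of_abs_lt_one (abs_lt.2 ⟨by linarith, hx₁⟩)
  have hle := sum_le_hasSum (Finset.range 2) (fun k _ => by positivity) hsum
  norm_num [Finset.sum_range_succ] at hle
  nlinarith [pow_pos hx₀ 3]

theorem two_lt_add_mul_slope_log {a b : ℝ} (ha : 0 < a) (hb : 0 < b) (hab : a ≠ b) :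
    2 < (a + b) * slope log a b := by
  wlog hlt : a < b generalizing a b
  · rw [slope_comm, add_comm]
    exact this hb ha hab.symm (hab.lt_or_gt.resolve_left hlt)
  set x := (b - a) / (a + b)
  have hx₀ : 0 < x := div_pos (by linarith) (by linarith)
  have hx₁ : x < 1 := (div_lt_one (by linarith)).2 (by linarith)
  have hlog : log (1 + x) - log (1 - x) = log b - log a := by
    rw [← log_div (by linarith) (by linarith), ← log_div hb.ne' ha.ne']
    congr 1
    rw [div_eq_div_iff (by linarith) ha.ne']
    simp only [x]
    field_simp
    ring
  have hx := hlog ▸ two_mul_lt_log_one_add_sub_log_one_sub hx₀ hx₁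
  rw [slope_def_field, ← mul_div_assoc, lt_div_iff₀ (by linarith)]
  rw [mul_div_assoc', div_lt_iff₀ (by linarith)] at hx
  linarith

theorem add_mul_dslope_log_self {a : ℝ} (ha : a ≠ 0) : (a + a) * dslope log a a = 2 := by
  rw [dslope_same, deriv_log]
  field_simp
  ring

theorem dslope_log_eq_ite (a b : ℝ) :
    dslope log a b = if a = b then a⁻¹ else (log a - log b) / (a - b) := by
  split_ifs with hab
  · rw [hab, dslope_same, deriv_log]
  · rw [dslope_of_ne _ (Ne.symm hab), slope_comm, slope_def_field]

theorem slope_log_mul_add_mul_slope_log_sub_two_pos {a b : ℝ} (ha : 0 < a) (hb : 0 < b)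
    (hab : a ≠ b) : 0 < slope log a b * ((a + b) * slope log a b - 2) := by
  have h := two_lt_add_mul_slope_log ha hb hab
  have hslope : 0 < slope log a b := pos_of_mul_pos_right (two_pos.trans h) (by positivity)
  exact mul_pos hslope (sub_pos.2 h)

theorem dslope_log_mul_add_mul_dslope_log_sub_two_nonneg {a b : ℝ} (ha : 0 < a) (hb : 0 < b) :
    0 ≤ dslope log a b * ((a + b) * dslope log a b - 2) := by
  rcases eq_or_ne a b with rfl | hab
  · rw [add_mul_dslope_log_self ha.ne', sub_self, mul_zero]
  · rw [dslope_of_ne _ hab.symm]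
    exact (slope_log_mul_add_mul_slope_log_sub_two_pos ha hb hab).le

theorem dslope_log_mul_add_mul_dslope_log_sub_two_eq_zero_iff {a b : ℝ} (ha : 0 < a)
    (hb : 0 < b) : dslope log a b * ((a + b) * dslope log a b - 2) = 0 ↔ a = b := by
  rcases eq_or_ne a b with rfl | hab
  · simp only [add_mul_dslope_log_self ha.ne', sub_self, mul_zero]
  · rw [dslope_of_ne _ hab.symm, iff_false_intro hab, iff_false]
    exact (slope_log_mul_add_mul_slope_log_sub_two_pos ha hb hab).ne'

theorem Finset.two_mul_sum_sum_mul_of_symm {ι α : Type*} [Fintype ι] [CommSemiring α]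
    (a : ι → α) {f : ι → ι → α} (hf : ∀ i j, f i j = f j i) :
    2 * ∑ i, ∑ j, a i * f i j = ∑ i, ∑ j, (a i + a j) * f i j := by
  have hswap : ∑ i, ∑ j, a i * f i j = ∑ i, ∑ j, a j * f i j := by
    rw [Finset.sum_comm]
    simp_rw [hf]
  simp_rw [add_mul, Finset.sum_add_distrib, two_mul]
  nth_rw 2 [hswap]

namespace Matrix

open Complex

variable {n : Type*}

theorem diagonal_mul_eq_mul_diagonal_iff {α : Type*} [Fintype n] [DecidableEq n]
    [CommRing α] [NoZeroDivisors α] {d : n → α} {A : Matrix n n α} :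
    diagonal d * A = A * diagonal d ↔ ∀ i j, d i ≠ d j → A i j = 0 := by
  simp only [← ext_iff, diagonal_mul, mul_diagonal]
  refine forall₂_congr fun i j => ?_
  rw [mul_comm (A i j), ← sub_eq_zero, ← sub_mul, mul_eq_zero, sub_eq_zero, or_iff_not_imp_left]

variable {R : Matrix n n ℂ} {c : Matrix n n ℝ}

theorem IsHermitian.normSq_apply_comm (hR : R.IsHermitian) (i j : n) :
    normSq (R j i) = normSq (R i j) := by
  rw [← hR.apply j i, star_def, normSq_conj]

theorem IsHermitian.mul_apply_swap (hR : R.IsHermitian) (hc : c.IsSymm) (i j : n) :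
    R i j * (c j i * R j i) = ↑(c i j * normSq (R i j)) := by
  rw [hc.apply, ← hR.apply j i, star_def, ofReal_mul, ← mul_conj]
  ring

variable [Fintype n]

theorem IsHermitian.trace_mul_hadamard (hR : R.IsHermitian) (hc : c.IsSymm) :
    (R * (c.map (↑) ⊙ R)).trace = ↑(∑ i, ∑ j, c i j * normSq (R i j)) := by
  simp only [trace, diag, mul_apply, hadamard_apply, map_apply, ofReal_sum,
    hR.mul_apply_swap hc]

theorem IsHermitian.trace_diagonal_mul_hadamard_mul_hadamard [DecidableEq n]
    (hR : R.IsHermitian) (hc : c.IsSymm) (p : n → ℝ) :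
    (diagonal (fun i => (p i : ℂ)) * (c.map (↑) ⊙ R) * (c.map (↑) ⊙ R)).trace =
      ↑(∑ i, ∑ j, p i * c i j ^ 2 * normSq (R i j)) := by
  simp only [trace, diag, mul_apply, diagonal_apply, ite_mul, zero_mul, Finset.sum_ite_eq,
    Finset.mem_univ, if_true, hadamard_apply, map_apply, ofReal_sum]
  refine Finset.sum_congr rfl fun i _ => Finset.sum_congr rfl fun j _ => ?_
  have h := hR.mul_apply_swap hc i j
  push_cast at h ⊢
  linear_combination (p i * c i j : ℂ) * h

theorem IsHermitian.two_mul_trace_diagonal_mul_mul_sub_trace_mul [DecidableEq n]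
    (hR : R.IsHermitian) (hc : c.IsSymm) (p : n → ℝ) :
    2 * ((diagonal (fun i => (p i : ℂ)) * (c.map (↑) ⊙ R) * (c.map (↑) ⊙ R)).trace -
        (R * (c.map (↑) ⊙ R)).trace) =
      ↑(∑ i, ∑ j, c i j * ((p i + p j) * c i j - 2) * normSq (R i j)) := by
  have hsymm := Finset.two_mul_sum_sum_mul_of_symm p
    (f := fun i j => c i j ^ 2 * normSq (R i j)) fun i j => by
      rw [hc.apply, hR.normSq_apply_comm]
  rw [hR.trace_diagonal_mul_hadamard_mul_hadamard hc, hR.trace_mul_hadamard hc]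
  norm_cast
  calc 2 * (∑ i, ∑ j, p i * c i j ^ 2 * normSq (R i j) - ∑ i, ∑ j, c i j * normSq (R i j))
      = ∑ i, ∑ j, (p i + p j) * (c i j ^ 2 * normSq (R i j)) -
          2 * ∑ i, ∑ j, c i j * normSq (R i j) := by
        simp only [← hsymm, mul_assoc, mul_sub]
    _ = _ := by
        simp only [Finset.mul_sum, ← Finset.sum_sub_distrib]
        exact Finset.sum_congr rfl fun i _ => Finset.sum_congr rfl fun j _ => by ring

end Matrix

open Matrix

theorem variance_ge_two_relent_general
    (N : ℕ) (p : Fin N → ℝ) (hp : ∀ i, 0 < p i)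
    (R : Matrix (Fin N) (Fin N) ℂ) (hR : R.IsHermitian)
    (σ : Matrix (Fin N) (Fin N) ℂ) (hσ : σ = Matrix.diagonal (fun i => (p i : ℂ)))
    (L : Matrix (Fin N) (Fin N) ℂ)
    (hL : ∀ i j, L i j =
      if p i = p j then R i j / (p i : ℂ)
      else (((Real.log (p i) - Real.log (p j)) / (p i - p j) : ℝ) : ℂ) * R i j) :
    ((σ * L * L).trace).re ≥ ((R * L).trace).re ∧
    ((σ * L * L).trace = (R * L).trace ↔ σ * R = R * σ) := by
  set c : Matrix (Fin N) (Fin N) ℝ := of fun i j => dslope log (p i) (p j) with hc_def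
  have hc : c.IsSymm := ext fun i j => dslope_comm log (p j) (p i)
  have hLc : L = c.map (↑) ⊙ R := by
    ext i j
    rw [hL, hadamard_apply, map_apply, hc_def, of_apply, dslope_log_eq_ite]
    split_ifs <;> simp [div_eq_inv_mul]
  have hgap := hR.two_mul_trace_diagonal_mul_mul_sub_trace_mul hc p
  rw [← hσ, ← hLc] at hgap
  simp only [hc_def, of_apply] at hgap
  have hw (i j : Fin N) :=
    mul_nonneg (dslope_log_mul_add_mul_dslope_log_sub_two_nonneg (hp i) (hp j))
      (Complex.normSq_nonneg (R i j))
  have hrow (i : Fin N) (_ : i ∈ Finset.univ) :=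
    Finset.sum_nonneg fun j (_ : j ∈ Finset.univ) => hw i j
  constructor
  · have hre := congrArg Complex.re hgap
    simp only [Complex.mul_re, Complex.re_ofNat, Complex.im_ofNat, zero_mul, sub_zero,
      Complex.sub_re, Complex.ofReal_re] at hre
    linarith [Finset.sum_nonneg hrow]
  · rw [← sub_eq_zero, ← mul_right_inj' (two_ne_zero' ℂ), mul_zero, hgap,
      Complex.ofReal_eq_zero, Finset.sum_eq_zero_iff_of_nonneg hrow, hσ,
      diagonal_mul_eq_mul_diagonal_iff]
    simp only [Finset.mem_univ, forall_const,
      Finset.sum_eq_zero_iff_of_nonneg fun j _ => hw _ j, mul_eq_zero,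
      dslope_log_mul_add_mul_dslope_log_sub_two_eq_zero_iff (hp _) (hp _),
      Complex.normSq_eq_zero, ne_eq, Complex.ofReal_inj, or_iff_not_imp_left]

theorem variance_ge_two_relent
    (N : ℕ) (p : Fin N → ℝ) (hp : ∀ i, 0 < p i) (hsum : ∑ i, p i = 1)
    (R : Matrix (Fin N) (Fin N) ℂ) (hR : R.IsHermitian) (htr : R.trace = 0)
    (σ : Matrix (Fin N) (Fin N) ℂ) (hσ : σ = Matrix.diagonal (fun i => (p i : ℂ)))
    (L : Matrix (Fin N) (Fin N) ℂ)
    (hL : ∀ i j, L i j =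
      if p i = p j then R i j / (p i : ℂ)
      else (((Real.log (p i) - Real.log (p j)) / (p i - p j) : ℝ) : ℂ) * R i j) :
    ((σ * L * L).trace).re ≥ ((R * L).trace).re ∧
    ((σ * L * L).trace = (R * L).trace ↔ σ * R = R * σ) :=
  variance_ge_two_relent_general N p hp R hR σ hσ L hL
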